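/- If X is a clique separator of a chordal graph G, then each connected component of G − X contains a vertex that is simplicial in G. -/

import Mathlib

open SimpleGraph

/-- A graph is chordal if it contains no induced cycle of length 4 or greater. -/
def IsChordal {V : Type*} (G : SimpleGraph V) : Prop :=
  ∀ n : ℕ, 4 ≤ n → IsEmpty (cycleGraph n ↪g G)

/-- `X` is a `u`-`v` separator: `u, v ∉ X` and every walk from `u` to `v` meets `X`. -/
def Separates {V : Type*} (G : SimpleGraph V) (X : Set V) (u v : V) : Prop :=
  u ∉ X ∧ v ∉ X ∧ ∀ p : G.Walk u v, ∃ x ∈ p.support, x ∈ X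

/-- `w` and `s` lie in the same connected component of `G - X`:
there is a walk between them avoiding `X`. -/
def ReachableAvoiding {V : Type*} (G : SimpleGraph V) (X : Set V) (w s : V) : Prop :=
  ∃ p : G.Walk w s, ∀ x ∈ p.support, x ∉ X

/-- A vertex is simplicial if its neighbourhood is a clique. -/
def IsSimplicial {V : Type*} (G : SimpleGraph V) (s : V) : Prop :=
  G.IsClique (G.neighborSet s)

/-!
Induction on the number of vertices. Let `C` be the component of `w` in `G - X`. If some vertex
lies outside `C ∪ X`, induction applies to `G[C ∪ X]`, and a simplicial vertex of `G[C ∪ X]` in `C`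
is simplicial in `G`, since all its neighbours lie in `C ∪ X`.

Otherwise, either `w` is simplicial or it has two non-adjacent neighbours `a` and `b`. Let `A` be
the component of `a` in `G - N[b]`. The outer boundary `S` of `A` lies in `N(b)` and separates `a`
from `b`. It is a clique: two non-adjacent `x, y ∈ S` are joined by a chordless path through `A`,
which closes up through `b` to an induced cycle of length at least `4`. Induction on the two
sides of `S` gives simplicial vertices `s` and `t` that are distinct and non-adjacent, so one of
them lies outside the clique `X`, hence in `C`.
-/

theorem SimpleGraph.cycleGraph_adj_iff_val {n : ℕ} {i j : Fin (n + 2)} :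
    (cycleGraph (n + 2)).Adj i j ↔
      i.val + 1 = j.val ∨ j.val + 1 = i.val ∨ (i.val = 0 ∧ j.val = n + 1) ∨
        (j.val = 0 ∧ i.val = n + 1) := by
  rw [cycleGraph_adj']
  rcases le_or_gt j i with h | h
  · rw [Fin.coe_sub_iff_le.2 h]
    rcases eq_or_lt_of_le h with h' | h'
    · subst h'
      simp only [sub_self, Fin.val_zero]
      omega
    · rw [Fin.coe_sub_iff_lt.2 h']
      omega
  · rw [Fin.coe_sub_iff_lt.2 h, Fin.coe_sub_iff_le.2 h.le]
    omega

namespace SimpleGraph.Walk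

variable {V : Type*} {G : SimpleGraph V} {u v : V}

theorem exists_length_lt_of_adj_getVert (p : G.Walk u v) {i j : ℕ} (hij : i + 1 < j)
    (hj : j ≤ p.length) (hadj : G.Adj (p.getVert i) (p.getVert j)) :
    ∃ q : G.Walk u v, q.length < p.length ∧ q.support ⊆ p.support := by
  refine ⟨(p.take i).append (cons hadj (p.drop j)), ?_, ?_⟩
  · simp only [length_append, take_length, length_cons, drop_length]
    omega
  · intro z hz
    rw [mem_support_append_iff, support_cons, support_take, drop_support_eq_support_drop_min,
      List.mem_cons] at hz
    rcases hz with hz | hz | hz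
    exacts [List.mem_of_mem_take hz, hz ▸ p.getVert_mem_support i, List.mem_of_mem_drop hz]

theorem exists_length_lt_of_not_isChordless (p : G.Walk u v) (hp : ¬p.IsChordless) :
    ∃ q : G.Walk u v, q.length < p.length ∧ q.support ⊆ p.support := by
  obtain ⟨a, b, ha, hb, hadj, hab⟩ : ∃ a b, a ∈ p.support ∧ b ∈ p.support ∧ G.Adj a b ∧
      s(a, b) ∉ p.edges := by
    simpa [isChordless_iff_forall_mem_edges] using hp
  obtain ⟨i, rfl, hi⟩ := mem_support_iff_exists_getVert.1 ha
  obtain ⟨j, rfl, hj⟩ := mem_support_iff_exists_getVert.1 hb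
  have hconsec : ∀ k, k < p.length → s(p.getVert k, p.getVert (k + 1)) ∈ p.edges :=
    fun k hk => (mk_mem_edges_iff_exists p).2 ⟨k, hk, rfl⟩
  rcases lt_trichotomy i j with hij | rfl | hji
  · rcases Nat.lt_or_ge (i + 1) j with hij' | hij'
    · exact p.exists_length_lt_of_adj_getVert hij' hj hadj
    · exact absurd (hconsec i (by omega)) (by rwa [show j = i + 1 by omega] at hab)
  · exact absurd hadj G.irrefl
  · rcases Nat.lt_or_ge (j + 1) i with hji' | hji'
    · exact p.exists_length_lt_of_adj_getVert hji' hi hadj.symm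
    · rw [Sym2.eq_swap, show i = j + 1 by omega] at hab
      exact absurd (hconsec j (by omega)) hab

theorem exists_isPath_isChordless (p : G.Walk u v) :
    ∃ q : G.Walk u v, q.IsPath ∧ q.IsChordless ∧ q.support ⊆ p.support := by
  classical
  induction h : p.length using Nat.strong_induction_on generalizing p with
  | _ n ih =>
    by_cases hc : p.bypass.IsChordless
    · exact ⟨p.bypass, p.bypass_isPath, hc, p.support_bypass_subset_support⟩
    obtain ⟨q, hq, hqp⟩ := p.bypass.exists_length_lt_of_not_isChordless hc
    obtain ⟨r, hr, hrc, hrq⟩ := ih q.length (h ▸ hq.trans_le p.length_bypass_le_length) q rfl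
    exact ⟨r, hr, hrc, fun z hz => p.support_bypass_subset_support (hqp (hrq hz))⟩

theorem IsChordless.adj_getVert_iff {p : G.Walk u v} (hc : p.IsChordless) (hp : p.IsPath)
    {i j : ℕ} (hi : i ≤ p.length) (hj : j ≤ p.length) :
    G.Adj (p.getVert i) (p.getVert j) ↔ i + 1 = j ∨ j + 1 = i := by
  refine ⟨fun hadj => ?_, ?_⟩
  · obtain ⟨k, hk, he⟩ := (mk_mem_edges_iff_exists p).1
      (hc.mem_edges (p.getVert_mem_support i) (p.getVert_mem_support j) hadj)
    have hinj := hp.getVert_injOn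
    rcases Sym2.eq_iff.1 he with ⟨h₁, h₂⟩ | ⟨h₁, h₂⟩
    · have := hinj (show k ≤ p.length by omega) hi h₁
      have := hinj (show k + 1 ≤ p.length by omega) hj h₂
      omega
    · have := hinj (show k ≤ p.length by omega) hj h₁
      have := hinj (show k + 1 ≤ p.length by omega) hi h₂
      omega
  · rintro (rfl | rfl)
    exacts [p.adj_getVert_succ (by omega), (p.adj_getVert_succ (by omega)).symm]

theorem IsPath.exists_cycleGraph_embedding {x y b : V} {p : G.Walk x y} (hp : p.IsPath)
    (hpc : p.IsChordless) (hbp : b ∉ p.support)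
    (hb : ∀ z ∈ p.support, G.Adj b z ↔ z = x ∨ z = y) :
    Nonempty (cycleGraph (p.length + 2) ↪g G) := by
  classical
  let f : Fin (p.length + 2) → V := fun i => if i.val = p.length + 1 then b else p.getVert i
  have hf_apex : ∀ i : Fin (p.length + 2), i.val = p.length + 1 → f i = b := fun i h => if_pos h
  have hf_path : ∀ i : Fin (p.length + 2), i.val ≤ p.length → f i = p.getVert i :=
    fun i h => if_neg (by omega)
  have hb_getVert : ∀ j ≤ p.length, G.Adj b (p.getVert j) ↔ j = 0 ∨ j = p.length := by
    intro j hj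
    rw [hb _ (p.getVert_mem_support j), hp.getVert_eq_start_iff hj, hp.getVert_eq_end_iff hj]
  have hbne : ∀ j, p.getVert j ≠ b := fun j h => hbp (h ▸ p.getVert_mem_support j)
  refine ⟨⟨⟨f, fun i j hij => ?_⟩, fun {i j} => ?_⟩⟩
  · rcases Nat.lt_or_ge p.length i.val with hi | hi <;>
      rcases Nat.lt_or_ge p.length j.val with hj | hj
    · exact Fin.ext (by omega)
    · rw [hf_apex i (by omega), hf_path j hj] at hij
      exact absurd hij.symm (hbne _)
    · rw [hf_path i hi, hf_apex j (by omega)] at hij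
      exact absurd hij (hbne _)
    · rw [hf_path i hi, hf_path j hj] at hij
      exact Fin.ext (hp.getVert_injOn hi hj hij)
  · change G.Adj (f i) (f j) ↔ _
    rw [cycleGraph_adj_iff_val]
    rcases Nat.lt_or_ge p.length i.val with hi | hi <;>
      rcases Nat.lt_or_ge p.length j.val with hj | hj
    · rw [hf_apex i (by omega), hf_apex j (by omega)]
      simp only [G.irrefl, false_iff]
      omega
    · rw [hf_apex i (by omega), hf_path j hj, hb_getVert j hj]
      omega
    · rw [hf_path i hi, hf_apex j (by omega), G.adj_comm, hb_getVert i hi]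
      omega
    · rw [hf_path i hi, hf_path j hj, hpc.adj_getVert_iff hp hi hj]
      omega

end SimpleGraph.Walk

section

variable {V : Type*} {G : SimpleGraph V}

theorem IsChordal.of_embedding {W : Type*} {H : SimpleGraph W} (hG : IsChordal G)
    (f : H ↪g G) : IsChordal H :=
  fun n hn => ⟨fun e => (hG n hn).false (f.comp e)⟩

theorem IsChordal.adj_of_isChordless (hG : IsChordal G) {x y b : V} {p : G.Walk x y}
    (hp : p.IsPath) (hpc : p.IsChordless) (hbp : b ∉ p.support)
    (hb : ∀ z ∈ p.support, G.Adj b z ↔ z = x ∨ z = y) (hxy : x ≠ y) : G.Adj x y := by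
  by_contra hnadj
  have hlen : 2 ≤ p.length := by
    by_contra! h
    interval_cases hl : p.length
    exacts [hxy (Walk.eq_of_length_eq_zero hl), hnadj (Walk.adj_of_length_eq_one hl)]
  obtain ⟨e⟩ := hp.exists_cycleGraph_embedding hpc hbp hb
  exact (hG _ (by omega)).false e

variable {X : Set V} {a b c : V}

namespace ReachableAvoiding

theorem refl (ha : a ∉ X) : ReachableAvoiding G X a a :=
  ⟨Walk.nil, by simpa using ha⟩

theorem symm (h : ReachableAvoiding G X a b) : ReachableAvoiding G X b a :=
  let ⟨p, hp⟩ := h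
  ⟨p.reverse, by simpa using hp⟩

theorem trans (h₁ : ReachableAvoiding G X a b) (h₂ : ReachableAvoiding G X b c) :
    ReachableAvoiding G X a c := by
  obtain ⟨p, hp⟩ := h₁
  obtain ⟨q, hq⟩ := h₂
  refine ⟨p.append q, fun z hz => ?_⟩
  rcases (Walk.mem_support_append_iff _ _).1 hz with hz | hz
  exacts [hp z hz, hq z hz]

theorem notMem_right (h : ReachableAvoiding G X a b) : b ∉ X :=
  let ⟨p, hp⟩ := h
  hp b p.end_mem_support

theorem trans_adj (h : ReachableAvoiding G X a b) (hbc : G.Adj b c) (hc : c ∉ X) :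
    ReachableAvoiding G X a c :=
  h.trans ⟨hbc.toWalk, by simp [h.notMem_right, hc]⟩

theorem map {W : Type*} {H : SimpleGraph W} (f : H →g G) {c d : W}
    (h : ReachableAvoiding H (f ⁻¹' X) c d) : ReachableAvoiding G X (f c) (f d) := by
  obtain ⟨p, hp⟩ := h
  refine ⟨p.map f, fun z hz => ?_⟩
  obtain ⟨z', hz', rfl⟩ := List.mem_map.1 (by rwa [Walk.support_map] at hz)
  exact hp z' hz'

theorem neighborSet_subset (h : ReachableAvoiding G X a b) :
    G.neighborSet b ⊆ {z | ReachableAvoiding G X a z} ∪ X := fun c hc =>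
  (em (c ∈ X)).elim Or.inr fun hcX => Or.inl (h.trans_adj hc hcX)

theorem compl_component (h : ReachableAvoiding G X a b) :
    ReachableAvoiding G {z | ReachableAvoiding G X a z}ᶜ a b := by
  classical
  obtain ⟨p, hp⟩ := h
  exact ⟨p, fun z hz hzA => hzA ⟨p.takeUntil z hz,
    fun t ht => hp t (p.support_takeUntil_subset_support hz ht)⟩⟩

end ReachableAvoiding

theorem Separates.not_reachableAvoiding (h : Separates G X a b) : ¬ReachableAvoiding G X a b :=
  fun ⟨p, hp⟩ => let ⟨x, hx, hxX⟩ := h.2.2 p; hp x hx hxX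

def SimpleGraph.outerBoundary (G : SimpleGraph V) (A : Set V) : Set V :=
  {x | x ∉ A ∧ ∃ z ∈ A, G.Adj z x}

theorem ReachableAvoiding.mem_of_outerBoundary {A : Set V}
    (h : ReachableAvoiding G (G.outerBoundary A) a b) (ha : a ∈ A) : b ∈ A := by
  obtain ⟨p, hp⟩ := h
  induction p with
  | nil => exact ha
  | @cons a a' b hadj q ih =>
    have ha' : a' ∈ A := by
      by_contra ha'
      exact hp a' (by simp) ⟨ha', a, ha, hadj⟩
    exact ih ha' (fun z hz => hp z (by simp [hz]))

theorem IsChordal.isClique_neighborSet_inter_outerBoundary (hG : IsChordal G) {A : Set V}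
    (hA : ∀ z₁ ∈ A, ∀ z₂ ∈ A, ReachableAvoiding G Aᶜ z₁ z₂)
    (hb : ∀ z ∈ A, z ∉ insert b (G.neighborSet b)) :
    G.IsClique (G.neighborSet b ∩ G.outerBoundary A) := by
  rintro x ⟨hbx, hxA, z₁, hz₁, hz₁x⟩ y ⟨hby, hyA, z₂, hz₂, hz₂y⟩ hxy
  obtain ⟨q, hq⟩ := hA z₁ hz₁ z₂ hz₂
  obtain ⟨p, hp, hpc, hpq⟩ :=
    (Walk.cons hz₁x.symm (q.concat hz₂y)).exists_isPath_isChordless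
  have hsupp : ∀ z ∈ p.support, z = x ∨ z = y ∨ z ∈ A := by
    intro z hz
    have hz' := hpq hz
    simp only [Walk.support_cons, Walk.support_concat, List.mem_cons, List.mem_append,
      List.mem_nil_iff, or_false] at hz'
    rcases hz' with rfl | hz' | rfl
    exacts [Or.inl rfl, Or.inr (Or.inr (not_not.1 (hq z hz'))), Or.inr (Or.inl rfl)]
  refine hG.adj_of_isChordless (b := b) hp hpc (fun hbp => ?_) (fun z hz => ?_) hxy
  · rcases hsupp b hbp with rfl | rfl | hbA
    exacts [G.irrefl hbx, G.irrefl hby, hb b hbA (Set.mem_insert b _)]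
  · rcases hsupp z hz with rfl | rfl | hzA
    · simpa using hbx
    · simpa using hby
    · have : ¬G.Adj b z := fun h => hb z hzA (Or.inr h)
      grind

theorem IsChordal.exists_isClique_separates (hG : IsChordal G) (hab : a ≠ b)
    (hnadj : ¬G.Adj a b) : ∃ S, G.IsClique S ∧ Separates G S a b := by
  set N := insert b (G.neighborSet b)
  set A := {z | ReachableAvoiding G N a z}
  have haN : a ∉ N := by
    rintro (rfl | h)
    exacts [hab rfl, hnadj h.symm]
  have hAN : ∀ z ∈ A, z ∉ N := fun z hz => hz.notMem_right
  have hsub : G.outerBoundary A ⊆ G.neighborSet b := by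
    rintro x ⟨hxA, z, hz, hzx⟩
    by_contra hx
    have hxN : x ∉ N := by
      rintro (rfl | h)
      exacts [hAN z hz (Or.inr hzx.symm), hx h]
    exact hxA (ReachableAvoiding.trans_adj hz hzx hxN)
  have hsep : Separates G (G.outerBoundary A) a b := by
    refine ⟨fun h => h.1 (.refl haN), fun h => G.irrefl (hsub h), fun p => ?_⟩
    by_contra! hp
    have hab' : ReachableAvoiding G (G.outerBoundary A) a b := ⟨p, hp⟩
    exact hAN b (hab'.mem_of_outerBoundary (.refl haN)) (Set.mem_insert b _)
  refine ⟨G.outerBoundary A, ?_, hsep⟩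
  rw [← Set.inter_eq_right.2 hsub]
  refine hG.isClique_neighborSet_inter_outerBoundary (fun z₁ h₁ z₂ h₂ => ?_) hAN
  exact h₁.compl_component.symm.trans h₂.compl_component

theorem IsSimplicial.of_induce {T : Set V} {s : T} (hs : IsSimplicial (G.induce T) s)
    (hN : G.neighborSet s ⊆ T) : IsSimplicial G s := by
  refine (isClique_induce_iff.1 hs).subset fun g hg => ?_
  exact ⟨⟨g, hN hg⟩, hg, rfl⟩

end

theorem IsChordal.exists_reachableAvoiding_isSimplicial {V : Type*} [Finite V]
    {G : SimpleGraph V} (hG : IsChordal G) {X : Set V} (hX : G.IsClique X) {w : V}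
    (hw : w ∉ X) : ∃ s, ReachableAvoiding G X w s ∧ IsSimplicial G s := by
  induction hn : Nat.card V using Nat.strong_induction_on generalizing V with
  | _ n ih =>
  have hsmaller : ∀ {Y : Set V}, G.IsClique Y → ∀ {c d : V}, c ∉ Y → d ∉ Y →
      ¬ReachableAvoiding G Y c d → ∃ s, ReachableAvoiding G Y c s ∧ IsSimplicial G s := by
    intro Y hY c d hc hd hcd
    set T := {z | ReachableAvoiding G Y c z} ∪ Y
    have hcard : Nat.card T < n :=
      hn ▸ Finite.card_subtype_lt (x := d) (by rintro (h | h); exacts [hcd h, hd h])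
    obtain ⟨s, hs, hss⟩ := ih _ hcard (hG.of_embedding (Embedding.induce T))
      (isClique_induce_iff.2 (hY.subset (Set.image_preimage_subset _ _)))
      (w := ⟨c, Or.inl (.refl hc)⟩) hc rfl
    have hs' := hs.map (Embedding.induce T).toHom
    exact ⟨s, hs', hss.of_induce hs'.neighborSet_subset⟩
  by_cases hC : ∃ d ∉ X, ¬ReachableAvoiding G X w d
  · obtain ⟨d, hd, hwd⟩ := hC
    exact hsmaller hX hw hd hwd
  push Not at hC
  by_cases hw' : IsSimplicial G w
  · exact ⟨w, .refl hw, hw'⟩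
  obtain ⟨a, -, b, -, hab, hnadj⟩ :
      ∃ a ∈ G.neighborSet w, ∃ b ∈ G.neighborSet w, a ≠ b ∧ ¬G.Adj a b := by
    simpa [IsSimplicial, isClique_iff, Set.Pairwise] using hw'
  obtain ⟨S, hS, hsep⟩ := hG.exists_isClique_separates hab hnadj
  have hab' := hsep.not_reachableAvoiding
  obtain ⟨s, hs, hss⟩ := hsmaller hS hsep.1 hsep.2.1 hab'
  obtain ⟨t, ht, htt⟩ := hsmaller hS hsep.2.1 hsep.1 (fun h => hab' h.symm)
  have hst : ¬(s = t ∨ G.Adj s t) := by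
    rintro (rfl | hst)
    exacts [hab' (hs.trans ht.symm), hab' ((hs.trans_adj hst ht.notMem_right).trans ht.symm)]
  by_cases hsX : s ∈ X
  · have htX : t ∉ X := fun htX => hst (eq_or_ne s t |>.imp_right (hX hsX htX ·))
    exact ⟨t, hC t htX, htt⟩
  · exact ⟨s, hC s hsX, hss⟩

theorem clique_separator_components_have_simplicial_general {V : Type*} [Fintype V]
    (G : SimpleGraph V) (hG : IsChordal G) (X : Set V) (hX : G.IsClique X) :
    ∀ w : V, w ∉ X → ∃ s : V, s ∉ X ∧ ReachableAvoiding G X w s ∧ IsSimplicial G s := by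
  intro w hw
  obtain ⟨s, hs, hss⟩ := hG.exists_reachableAvoiding_isSimplicial hX hw
  exact ⟨s, hs.notMem_right, hs, hss⟩

/-- If `X` is a clique separator (a vertex cut inducing a complete subgraph, not necessarily
minimal) of a chordal graph `G`, then each connected component of `G − X` contains a vertex
that is simplicial in `G`. -/
theorem clique_separator_components_have_simplicial {V : Type*} [Fintype V]
    (G : SimpleGraph V) (hG : IsChordal G) (X : Set V) (hX : G.IsClique X)
    (u v : V) (hsep : Separates G X u v) :
    ∀ w : V, w ∉ X → ∃ s : V, s ∉ X ∧ ReachableAvoiding G X w s ∧ IsSimplicial G s :=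
  clique_separator_components_have_simplicial_general G hG X hX
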